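/- arXiv:2604.27341 — 5 statements merged into one kernel-verified Lean document; each statement's English description precedes it below -/
import Mathlib

section
/- Over a field of characteristic p, a monic polynomial F(t) of degree n has a root α of multiplicity at least p if and only if, writing F(t) = Σ_{k=0}^{p-1} t^k f̃_k(t^p) with f̃_k as the mod-p collected coefficients, the polynomials f̃_0, ..., f̃_{p-1} have the common root α^p. -/
/-- over a field of characteristic `p`, a monic polynomial `F` of degree
`n ≥ p` has `α` as a root of multiplicity at least `p` iff, writing
`F(t) = ∑_{k<p} t^k f̃_k(t^p)`, the polynomials `f̃_0, …, f̃_{p-1}` all vanish at `α^p`. -/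
theorem stmt2 (k : Type*) [Field k] (p n : ℕ) [Fact p.Prime] [CharP k p]
    (hn : p ≤ n) (F : Polynomial k) (hmon : F.Monic) (hdeg : F.natDegree = n)
    (α : k) (f : Fin p → Polynomial k)
    (hf : F = ∑ i : Fin p, Polynomial.X ^ (i : ℕ) * (f i).comp (Polynomial.X ^ p)) :
    (Polynomial.X - Polynomial.C α) ^ p ∣ F ↔ ∀ i : Fin p, (f i).eval (α ^ p) = 0 := by
  classical
  have hp : 0 < p := (Fact.out : p.Prime).pos
  set D : Polynomial k := (Polynomial.X - Polynomial.C α) ^ p with hD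
  have hDeq : D = Polynomial.X ^ p - Polynomial.C (α ^ p) := by
    rw [hD, sub_pow_char, ← Polynomial.C_pow]
  set c : Fin p → k := fun i => (f i).eval (α ^ p) with hc
  set R : Polynomial k := ∑ i : Fin p, Polynomial.monomial (i : ℕ) (c i) with hR
  have hFR : D ∣ F - R := by
    rw [hf, hR, ← Finset.sum_sub_distrib]
    apply Finset.dvd_sum
    intro i _
    have h1 : (Polynomial.X - Polynomial.C (α ^ p)) ∣ (f i - Polynomial.C (c i)) := by
      rw [Polynomial.dvd_iff_isRoot]
      simp [Polynomial.IsRoot, hc]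
    obtain ⟨u, hu⟩ := h1
    have h2 : (f i).comp (Polynomial.X ^ p) - Polynomial.C (c i) =
        D * u.comp (Polynomial.X ^ p) := by
      have := congrArg (fun g => g.comp (Polynomial.X ^ p)) hu
      simpa [Polynomial.sub_comp, Polynomial.mul_comp, Polynomial.C_comp,
        Polynomial.X_comp, hDeq] using this
    have h3 : Polynomial.X ^ (i : ℕ) * (f i).comp (Polynomial.X ^ p)
        - Polynomial.monomial (i : ℕ) (c i)
        = Polynomial.X ^ (i : ℕ) * ((f i).comp (Polynomial.X ^ p) - Polynomial.C (c i)) := by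
      rw [mul_sub, mul_comm (Polynomial.X ^ (i : ℕ)) (Polynomial.C (c i)),
        Polynomial.C_mul_X_pow_eq_monomial]
    rw [h3, h2]
    exact Dvd.dvd.mul_left (dvd_mul_right D _) _
  have hiff : D ∣ F ↔ D ∣ R := by
    constructor
    · intro h
      have := dvd_sub h hFR
      simpa using this
    · intro h
      have := dvd_add hFR h
      simpa using this
  have hcoeff : ∀ j : Fin p, R.coeff j = c j := by
    intro j
    rw [hR, Polynomial.finset_sum_coeff]
    rw [Finset.sum_eq_single j]
    · simp
    · intro b _ hbj
      rw [Polynomial.coeff_monomial]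
      have : (b : ℕ) ≠ (j : ℕ) := fun h => hbj (Fin.ext h)
      simp [this]
    · simp
  rw [show ((Polynomial.X - Polynomial.C α) ^ p ∣ F) ↔ D ∣ F from Iff.rfl, hiff]
  constructor
  · intro h i
    have hRdeg : R.degree < p := by
      rw [hR]
      apply lt_of_le_of_lt (Polynomial.degree_sum_le _ _)
      rw [Finset.sup_lt_iff (by exact_mod_cast WithBot.bot_lt_coe p)]
      intro b _
      exact lt_of_le_of_lt (Polynomial.degree_monomial_le _ _)
        (by exact_mod_cast Nat.cast_lt.2 b.isLt)
    have hR0 : R = 0 := by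
      by_contra hne
      have hle := Polynomial.degree_le_of_dvd h hne
      rw [hDeq, Polynomial.degree_X_pow_sub_C hp] at hle
      exact absurd (lt_of_le_of_lt hle hRdeg) (lt_irrefl _)
    have := hcoeff i
    rw [hR0] at this
    simpa [hc] using this.symm
  · intro h
    have hR0 : R = 0 := by
      rw [hR]
      apply Finset.sum_eq_zero
      intro i _
      simp [hc, h i]
    rw [hR0]
    exact dvd_zero D
end

section
/- Let f_0, f_1, ..., f_{p-1} be univariate polynomials over an algebraically closed field k with f_0 nonzero. Then f_0, ..., f_{p-1} have a common root in k if and only if for every tuple μ = (μ_1, ..., μ_{p-1}) ∈ k^{p-1}, the polynomials f_0 and h_μ = Σ_{i=1}^{p-1} μ_i f_i have a common root in k. -/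
/-- over an algebraically closed field, `f_0, …, f_{p-1}` (with `f_0 ≠ 0`)
have a common root iff for every `μ ∈ k^{p-1}` the polynomials `f_0` and
`h_μ = ∑_{i=1}^{p-1} μ_i f_i` have a common root. -/
theorem stmt3 (k : Type*) [Field k] [IsAlgClosed k] (p : ℕ) (hp : 2 ≤ p)
    (f : ℕ → Polynomial k) (hf0 : f 0 ≠ 0) :
    (∃ α : k, ∀ i < p, (f i).eval α = 0) ↔
      ∀ μ : ℕ → k, ∃ α : k, (f 0).eval α = 0 ∧
        (∑ i ∈ Finset.Ico 1 p, Polynomial.C (μ i) * f i).eval α = 0 := by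
  classical
  constructor
  · rintro ⟨α, hα⟩ μ
    refine ⟨α, hα 0 (by omega), ?_⟩
    rw [Polynomial.eval_finset_sum]
    apply Finset.sum_eq_zero
    intro i hi
    simp [hα i (Finset.mem_Ico.mp hi).2]
  · intro h
    by_contra hc
    push_neg at hc
    -- for each α, some f i (i < p) doesn't vanish
    set g : k → Polynomial k := fun α =>
      ∑ i ∈ Finset.Ico 1 p, Polynomial.C ((f i).eval α) * Polynomial.X ^ i with hg_def
    have hg : ∀ α : k, (f 0).eval α = 0 → g α ≠ 0 := by
      intro α hα0
      obtain ⟨i, hip, hne⟩ := hc α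
      have hi1 : 1 ≤ i := by
        rcases Nat.eq_zero_or_pos i with h0 | h0
        · exact absurd (h0 ▸ hα0) (h0 ▸ hne)
        · exact h0
      intro hzero
      apply hne
      have : (g α).coeff i = (f i).eval α := by
        rw [hg_def]
        simp only [Polynomial.finset_sum_coeff, Polynomial.coeff_C_mul,
          Polynomial.coeff_X_pow]
        rw [Finset.sum_eq_single i]
        · simp
        · intro j _ hj
          simp [Ne.symm hj]
        · intro hni
          exact absurd (Finset.mem_Ico.mpr ⟨hi1, hip⟩) hni
      rw [hzero] at this
      simpa using this.symm
    -- the set of bad parameters is finite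
    have hbad : (⋃ α ∈ (f 0).roots.toFinset, {c : k | (g α).eval c = 0}).Finite := by
      apply Set.Finite.biUnion ((f 0).roots.toFinset : Finset k).finite_toSet
      intro α hα
      have hroot : (f 0).eval α = 0 := by
        have := Multiset.mem_toFinset.mp hα
        exact (Polynomial.mem_roots hf0).mp this
      exact Polynomial.finite_setOf_isRoot (hg α hroot)
    obtain ⟨c, hcmem⟩ := hbad.exists_notMem
    obtain ⟨α, hα0, hαs⟩ := h (fun i => c ^ i)
    apply hcmem
    have hαmem : α ∈ (f 0).roots.toFinset :=
      Multiset.mem_toFinset.mpr ((Polynomial.mem_roots hf0).mpr hα0)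
    have hgc : (g α).eval c = 0 := by
      rw [hg_def]
      rw [Polynomial.eval_finset_sum] at hαs ⊢
      rw [← hαs]
      apply Finset.sum_congr rfl
      intro i _
      simp only [Polynomial.eval_mul, Polynomial.eval_C, Polynomial.eval_pow,
        Polynomial.eval_X]
      ring
    exact Set.mem_biUnion hαmem hgc
end

section
/- For p ≥ 3 and q = 2, the kernel of the k-algebra homomorphism φ: k[e_1,...,e_{2p}] → k[u_1,...,u_p,α] given by φ(e_i) = u_i for 1 ≤ i ≤ p-1, φ(e_p) = u_p + α, and φ(e_{p+i}) = u_i α for 1 ≤ i ≤ p, equals the elimination ideal ⟨f_0, f_1, ..., f_{p-1}⟩ ∩ k[e_1,...,e_{2p}], where f_0 = t² + e_p t + e_{2p} and f_i = e_i t + e_{p+i} for 1 ≤ i ≤ p-1 are polynomials in k[e_1,...,e_{2p}][t]. -/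
/-!
Extend `φ` to `ψ : k[e][t] → k[u, α]` by `t ↦ -α`; then `ker φ = ker ψ ∩ k[e]`, and it suffices
to show `ker ψ = J := ⟨f₀, …, f_{p-1}⟩`. Each `f_i` vanishes under `ψ`. Conversely, let
`θ : k[u, α] → k[e][t]` send `u_i ↦ e_i` (`i < p`), `u_p ↦ e_p + t`, `α ↦ -t`. Modulo `J` we have
`e_{p+i} ≡ -e_i t` and `e_{2p} ≡ -(e_p + t) t`, which says exactly that `θ ∘ ψ ≡ id` on the
generators `e_i` and `t`, hence everywhere; so `ψ F = 0` forces `F ∈ J`.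
-/

/-- The algebra map `φ : k[e_1,…,e_{2p}] → k[u_1,…,u_p,α]` with
`φ(e_i) = u_i` (1 ≤ i ≤ p-1), `φ(e_p) = u_p + α`, `φ(e_{p+i}) = u_i α` (1 ≤ i ≤ p).
Variables are 0-indexed: `X i : MvPolynomial (Fin (2*p)) k` is `e_{i+1}`, and in
`MvPolynomial (Fin (p+1)) k` the variable `X ⟨j⟩` for `j < p` is `u_{j+1}` while
`X ⟨p⟩` is `α`. -/
noncomputable def phiMap (k : Type*) [Field k] (p : ℕ) :
    MvPolynomial (Fin (2 * p)) k →ₐ[k] MvPolynomial (Fin (p + 1)) k :=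
  MvPolynomial.aeval fun i : Fin (2 * p) =>
    if h : (i : ℕ) < p - 1 then MvPolynomial.X ⟨(i : ℕ), by omega⟩
    else if h2 : (i : ℕ) = p - 1 then
      MvPolynomial.X ⟨p - 1, by omega⟩ + MvPolynomial.X ⟨p, by omega⟩
    else MvPolynomial.X ⟨(i : ℕ) - p, by have := i.isLt; omega⟩ * MvPolynomial.X ⟨p, by omega⟩

/-- The generators `f₀ = t² + e_p t + e_{2p}` and `f_i = e_i t + e_{p+i}`
(1 ≤ i ≤ p-1) of the ideal `⟨f₀,…,f_{p-1}⟩ ⊆ k[e_1,…,e_{2p}][t]`. -/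
noncomputable def q2Gens (k : Type*) [Field k] (p : ℕ) (hp : 3 ≤ p) :
    Set (Polynomial (MvPolynomial (Fin (2 * p)) k)) :=
  insert
    (Polynomial.X ^ 2 +
      Polynomial.C (MvPolynomial.X ⟨p - 1, by omega⟩) * Polynomial.X +
      Polynomial.C (MvPolynomial.X ⟨2 * p - 1, by omega⟩))
    {g | ∃ j : Fin (p - 1),
      g = Polynomial.C (MvPolynomial.X (⟨(j : ℕ), by have := j.isLt; omega⟩ : Fin (2 * p))) *
            Polynomial.X +
          Polynomial.C (MvPolynomial.X (⟨p + (j : ℕ), by have := j.isLt; omega⟩ : Fin (2 * p)))}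

theorem AlgHom.ker_eq_of_mkₐ_comp_eq {R A B : Type*} [CommSemiring R] [CommRing A] [Algebra R A]
    [Semiring B] [Algebra R B] {ψ : A →ₐ[R] B} {θ : B →ₐ[R] A} {I : Ideal A}
    (hI : I ≤ RingHom.ker ψ)
    (hθ : (Ideal.Quotient.mkₐ R I).comp (θ.comp ψ) = Ideal.Quotient.mkₐ R I) :
    RingHom.ker ψ = I := by
  refine le_antisymm (fun a ha => ?_) hI
  rw [← Ideal.Quotient.eq_zero_iff_mem, ← Ideal.Quotient.mkₐ_eq_mk R, ← hθ]
  simp [RingHom.mem_ker.1 ha]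

open Polynomial

section

variable (k : Type*) [Field k] (p : ℕ)

noncomputable def psiMap : (MvPolynomial (Fin (2 * p)) k)[X] →ₐ[k] MvPolynomial (Fin (p + 1)) k :=
  aevalTower (phiMap k p) (-MvPolynomial.X ⟨p, p.lt_add_one⟩)

noncomputable def thetaMap : MvPolynomial (Fin (p + 1)) k →ₐ[k] (MvPolynomial (Fin (2 * p)) k)[X] :=
  MvPolynomial.aeval fun j =>
    if h : (j : ℕ) < p then C (MvPolynomial.X ⟨j, by omega⟩) + if (j : ℕ) = p - 1 then X else 0
    else -X

variable {k p}

theorem phiMap_X_of_lt {i : ℕ} (hi : i < p - 1) (h : i < 2 * p) :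
    phiMap k p (MvPolynomial.X ⟨i, h⟩) = MvPolynomial.X ⟨i, by omega⟩ := by
  simp [phiMap, hi]

theorem phiMap_X_pred (h : p - 1 < 2 * p) :
    phiMap k p (MvPolynomial.X ⟨p - 1, h⟩) =
      MvPolynomial.X ⟨p - 1, by omega⟩ + MvPolynomial.X ⟨p, by omega⟩ := by
  simp [phiMap]

theorem phiMap_X_add {j : ℕ} (hj : j < p) (h : p + j < 2 * p) :
    phiMap k p (MvPolynomial.X ⟨p + j, h⟩) =
      MvPolynomial.X ⟨j, by omega⟩ * MvPolynomial.X ⟨p, by omega⟩ := by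
  simp only [phiMap, MvPolynomial.aeval_X]
  rw [dif_neg (by omega), dif_neg (by omega)]
  simp

theorem phiMap_X_last (h : 2 * p - 1 < 2 * p) :
    phiMap k p (MvPolynomial.X ⟨2 * p - 1, h⟩) =
      MvPolynomial.X ⟨p - 1, by omega⟩ * MvPolynomial.X ⟨p, by omega⟩ := by
  have h2p : (⟨2 * p - 1, h⟩ : Fin (2 * p)) = ⟨p + (p - 1), by omega⟩ := Fin.ext (by simp; omega)
  rw [h2p, phiMap_X_add (by omega)]

theorem thetaMap_X_of_lt {j : ℕ} (hj : j < p - 1) (h : j < p + 1) :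
    thetaMap k p (MvPolynomial.X ⟨j, h⟩) = C (MvPolynomial.X ⟨j, by omega⟩) := by
  simp [thetaMap, (by omega : j < p), hj.ne]

theorem thetaMap_X_pred (hp : 0 < p) (h : p - 1 < p + 1) :
    thetaMap k p (MvPolynomial.X ⟨p - 1, h⟩) = C (MvPolynomial.X ⟨p - 1, by omega⟩) + X := by
  simp [thetaMap, hp]

theorem thetaMap_X_last (h : p < p + 1) :
    thetaMap k p (MvPolynomial.X ⟨p, h⟩) = -X := by
  simp [thetaMap]

theorem C_X_sub_thetaMap_phiMap_X_mem (hp : 3 ≤ p) (i : Fin (2 * p)) :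
    C (MvPolynomial.X i) - thetaMap k p (phiMap k p (MvPolynomial.X i)) ∈
      Ideal.span (q2Gens k p hp) := by
  obtain ⟨i, hi⟩ := i
  obtain h | rfl | ⟨j, hj, rfl⟩ | rfl :
      i < p - 1 ∨ i = p - 1 ∨ (∃ j < p - 1, i = p + j) ∨ i = 2 * p - 1 := by
    rcases Nat.lt_or_ge i p with h | h
    · omega
    · by_cases h' : i = 2 * p - 1
      · exact .inr (.inr (.inr h'))
      · exact .inr (.inr (.inl ⟨i - p, by omega, by omega⟩))
  · rw [phiMap_X_of_lt h, thetaMap_X_of_lt h, sub_self]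
    exact zero_mem _
  · rw [phiMap_X_pred, map_add, thetaMap_X_pred (by omega), thetaMap_X_last,
      add_neg_cancel_right, sub_self]
    exact zero_mem _
  · rw [phiMap_X_add (by omega), map_mul, thetaMap_X_of_lt hj, thetaMap_X_last]
    convert SetLike.mem_coe.1
      (Ideal.subset_span (s := q2Gens k p hp) (Set.mem_insert_of_mem _ ⟨⟨j, hj⟩, rfl⟩)) using 1
    ring
  · rw [phiMap_X_last, map_mul, thetaMap_X_pred (by omega), thetaMap_X_last]
    convert SetLike.mem_coe.1 (Ideal.subset_span (s := q2Gens k p hp) (Set.mem_insert _ _)) using 1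
    ring

theorem psiMap_C (a : MvPolynomial (Fin (2 * p)) k) : psiMap k p (C a) = phiMap k p a :=
  aevalTower_C _ _ _

theorem psiMap_X : psiMap k p X = -MvPolynomial.X ⟨p, p.lt_add_one⟩ :=
  aevalTower_X _ _

theorem span_q2Gens_le_ker_psiMap (hp : 3 ≤ p) :
    Ideal.span (q2Gens k p hp) ≤ RingHom.ker (psiMap k p) := by
  rw [Ideal.span_le]
  rintro g (rfl | ⟨⟨j, hj⟩, rfl⟩) <;>
    simp only [SetLike.mem_coe, RingHom.mem_ker, map_add, map_mul, map_pow, psiMap_C, psiMap_X]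
  · rw [phiMap_X_pred, phiMap_X_last]
    ring
  · rw [phiMap_X_of_lt hj, phiMap_X_add (by omega)]
    ring

theorem thetaMap_psiMap_X : thetaMap k p (psiMap k p X) = X := by
  rw [psiMap_X, map_neg, thetaMap_X_last, neg_neg]

theorem mkₐ_comp_thetaMap_comp_psiMap (hp : 3 ≤ p) :
    (Ideal.Quotient.mkₐ k (Ideal.span (q2Gens k p hp))).comp ((thetaMap k p).comp (psiMap k p)) =
      Ideal.Quotient.mkₐ k (Ideal.span (q2Gens k p hp)) := by
  ext i
  · have h := Ideal.Quotient.eq.2 (C_X_sub_thetaMap_phiMap_X_mem (k := k) hp i)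
    rw [← psiMap_C] at h
    exact h.symm
  · simp only [AlgHom.comp_apply, thetaMap_psiMap_X]

theorem ker_psiMap (hp : 3 ≤ p) : RingHom.ker (psiMap k p) = Ideal.span (q2Gens k p hp) :=
  AlgHom.ker_eq_of_mkₐ_comp_eq (span_q2Gens_le_ker_psiMap hp) (mkₐ_comp_thetaMap_comp_psiMap hp)

end

theorem stmt5_general (k : Type*) [Field k] (p : ℕ) (hp : 3 ≤ p) :
    RingHom.ker (phiMap k p) =
      Ideal.comap (Polynomial.C : MvPolynomial (Fin (2 * p)) k →+*
          Polynomial (MvPolynomial (Fin (2 * p)) k))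
        (Ideal.span (q2Gens k p hp)) := by
  ext a
  rw [← ker_psiMap hp, Ideal.mem_comap, RingHom.mem_ker, RingHom.mem_ker, psiMap_C]

/-- for `q = 2` and `p ≥ 3`, the kernel of `φ` equals the elimination ideal
`⟨f₀, f₁, …, f_{p-1}⟩ ∩ k[e_1,…,e_{2p}]`. -/
theorem stmt5 (k : Type*) [Field k] [IsAlgClosed k] (p : ℕ) (hp : 3 ≤ p) :
    RingHom.ker (phiMap k p) =
      Ideal.comap (Polynomial.C : MvPolynomial (Fin (2 * p)) k →+*
          Polynomial (MvPolynomial (Fin (2 * p)) k))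
        (Ideal.span (q2Gens k p hp)) :=
  stmt5_general k p hp
end

section
/- A point (e_1, ..., e_{2p}) ∈ k^{2p} lies in the vanishing locus of the elimination ideal ⟨f_0, ..., f_{p-1}⟩ ∩ k[e_1,...,e_{2p}] (with f_0 = t² + e_p t + e_{2p}, f_i = e_i t + e_{p+i}) if and only if there exist u_1, ..., u_p, α ∈ k such that e_i = u_i (1 ≤ i ≤ p-1), e_p = u_p + α, and e_{p+i} = u_i α (1 ≤ i ≤ p); equivalently, the polynomials f_0, ..., f_{p-1} specialized at this point have a common root. -/
/-!
A common root clearly makes every element of the elimination ideal vanish. Conversely, the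
elimination ideal contains the resultants `c a_j² - a_j b d_j + d_j²` of `f₀ = t² + b t + c` with
`f_j = a_j t + d_j`, and the cross terms `a_i d_j - a_j d_i`. If `β, γ` are the roots of `f₀`, the
resultant of `f_j` is `f_j(β) f_j(γ)`, so each `f_j` vanishes at `β` or at `γ`; since the `f_j` are
pairwise proportional, they all vanish at the same one of the two.
-/

open Polynomial

section CommonRoot

variable {k ι : Type*} [Field k]

theorem forall_or_forall_of_mul_eq_zero_of_cross_eq (β γ : k) (a d : ι → k)
    (hprod : ∀ j, (a j * β + d j) * (a j * γ + d j) = 0)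
    (hcross : ∀ i j, a i * d j = a j * d i) :
    (∀ j, a j * β + d j = 0) ∨ ∀ j, a j * γ + d j = 0 := by
  refine or_iff_not_imp_left.mpr fun hβ j => ?_
  push Not at hβ
  obtain ⟨i, hi⟩ := hβ
  have hiγ : a i * γ + d i = 0 := (mul_eq_zero.mp (hprod i)).resolve_left hi
  by_cases hai : a i = 0
  · have hdi : d i ≠ 0 := fun hdi => hi (by simp [hai, hdi])
    have haj : a j = 0 := by simpa [hai, hdi, eq_comm] using hcross i j
    have hdj : d j = 0 := by simpa [haj] using hprod j
    simp [haj, hdj]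
  · have : a i * (a j * γ + d j) = 0 := by linear_combination a j * hiγ + hcross i j
    exact (mul_eq_zero.mp this).resolve_left hai

theorem exists_common_root_of_resultant_eq_zero [IsAlgClosed k] (b c : k) (a d : ι → k)
    (hres : ∀ j, c * a j ^ 2 - a j * b * d j + d j ^ 2 = 0)
    (hcross : ∀ i j, a i * d j = a j * d i) :
    ∃ β, β ^ 2 + b * β + c = 0 ∧ ∀ j, a j * β + d j = 0 := by
  have hdeg : (X ^ 2 + C b * X + C c).degree = 2 := by compute_degree!
  obtain ⟨β, hβ⟩ := IsAlgClosed.exists_root (X ^ 2 + C b * X + C c) (by simp [hdeg])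
  replace hβ : β ^ 2 + b * β + c = 0 := by simpa using hβ
  have hprod : ∀ j, (a j * β + d j) * (a j * (-b - β) + d j) = 0 := fun j => by
    linear_combination hres j - a j ^ 2 * hβ
  rcases forall_or_forall_of_mul_eq_zero_of_cross_eq β (-b - β) a d hprod hcross with h | h
  · exact ⟨β, hβ, h⟩
  · exact ⟨-b - β, by linear_combination hβ, h⟩

end CommonRoot

section EliminationIdeal

variable {R : Type*} [CommRing R] {I : Ideal R[X]}

theorem C_resultant_mem {a b c d : R} (hq : X ^ 2 + C b * X + C c ∈ I)
    (hl : C a * X + C d ∈ I) : C (c * a ^ 2 - a * b * d + d ^ 2) ∈ I := by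
  have : C (c * a ^ 2 - a * b * d + d ^ 2) =
      C (a ^ 2) * (X ^ 2 + C b * X + C c) - (C a * X + C (a * b - d)) * (C a * X + C d) := by
    simp only [map_sub, map_add, map_mul, map_pow]
    ring
  rw [this]
  exact I.sub_mem (I.mul_mem_left _ hq) (I.mul_mem_left _ hl)

theorem C_cross_mem {a d a' d' : R} (hl : C a * X + C d ∈ I) (hl' : C a' * X + C d' ∈ I) :
    C (a * d' - a' * d) ∈ I := by
  have : C (a * d' - a' * d) = C a * (C a' * X + C d') - C a' * (C a * X + C d) := by
    simp only [map_sub, map_mul]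
    ring
  rw [this]
  exact I.sub_mem (I.mul_mem_left _ hl') (I.mul_mem_left _ hl)

theorem eq_zero_of_mem_comap_C_span {S : Type*} [CommRing S] (φ : R →+* S) (β : S)
    {G : Set R[X]} (hG : ∀ g ∈ G, g.eval₂ φ β = 0) {r : R}
    (hr : r ∈ (Ideal.span G).comap (C : R →+* R[X])) : φ r = 0 := by
  have hle : Ideal.span G ≤ RingHom.ker (eval₂RingHom φ β) := Ideal.span_le.mpr hG
  simpa using hle hr

end EliminationIdeal

section Specialization

variable {k : Type*} [Field k]

def VanishesOnEliminationIdeal (p : ℕ) (hp : 3 ≤ p) (e : Fin (2 * p) → k) : Prop :=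
  ∀ g ∈ Ideal.comap (Polynomial.C : MvPolynomial (Fin (2 * p)) k →+*
      Polynomial (MvPolynomial (Fin (2 * p)) k)) (Ideal.span (q2Gens k p hp)),
    MvPolynomial.eval e g = 0

def HasParametrization (p : ℕ) (hp : 3 ≤ p) (e : Fin (2 * p) → k) : Prop :=
  ∃ u : Fin p → k, ∃ α : k,
    (∀ j : Fin (p - 1), e ⟨(j : ℕ), by have := j.isLt; omega⟩ =
        u ⟨(j : ℕ), j.isLt.trans_le (Nat.sub_le p 1)⟩) ∧
    e ⟨p - 1, by omega⟩ = u ⟨p - 1, Nat.sub_one_lt_of_lt hp⟩ + α ∧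
    (∀ j : Fin p, e ⟨p + (j : ℕ), (Nat.add_lt_add_left j.isLt p).trans_eq (two_mul p).symm⟩ =
      u j * α)

def HasCommonRoot (p : ℕ) (hp : 3 ≤ p) (e : Fin (2 * p) → k) : Prop :=
  ∃ β : k,
    (X ^ 2 + C (e ⟨p - 1, by omega⟩) * X + C (e ⟨2 * p - 1, by omega⟩)).eval β = 0 ∧
    ∀ j : Fin (p - 1),
      (C (e ⟨(j : ℕ), by have := j.isLt; omega⟩) * X +
        C (e ⟨p + (j : ℕ), by have := j.isLt; omega⟩)).eval β = 0

variable (p : ℕ) (hp : 3 ≤ p) (e : Fin (2 * p) → k)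

theorem vanishesOnEliminationIdeal_of_hasCommonRoot (h : HasCommonRoot p hp e) :
    VanishesOnEliminationIdeal p hp e := by
  obtain ⟨β, hq, hl⟩ := h
  refine fun g hg => eq_zero_of_mem_comap_C_span (MvPolynomial.eval e) β ?_ hg
  rintro f (rfl | ⟨j, rfl⟩)
  · simpa using hq
  · simpa using hl j

theorem hasCommonRoot_of_vanishesOnEliminationIdeal [IsAlgClosed k]
    (h : VanishesOnEliminationIdeal p hp e) : HasCommonRoot p hp e := by
  have hq := Ideal.subset_span (s := q2Gens k p hp) (Set.mem_insert _ _)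
  have hl (j : Fin (p - 1)) :=
    Ideal.subset_span (s := q2Gens k p hp) (Set.mem_insert_of_mem _ ⟨j, rfl⟩)
  obtain ⟨β, hβ, hβl⟩ := exists_common_root_of_resultant_eq_zero (e ⟨p - 1, by omega⟩)
    (e ⟨2 * p - 1, by omega⟩) (fun j : Fin (p - 1) => e ⟨(j : ℕ), by have := j.isLt; omega⟩)
    (fun j => e ⟨p + (j : ℕ), by have := j.isLt; omega⟩)
    (fun j => by simpa using h _ (Ideal.mem_comap.mpr (C_resultant_mem hq (hl j))))
    (fun i j => sub_eq_zero.mp <| by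
      simpa using h _ (Ideal.mem_comap.mpr (C_cross_mem (hl i) (hl j))))
  exact ⟨β, by simpa using hβ, fun j => by simpa using hβl j⟩

theorem hasParametrization_iff_hasCommonRoot :
    HasParametrization p hp e ↔ HasCommonRoot p hp e := by
  have hlast (j : Fin p) (hj : (j : ℕ) = p - 1) :
      e ⟨p + (j : ℕ), by omega⟩ = e ⟨2 * p - 1, by omega⟩ :=
    congrArg e (Fin.ext (by simp only; omega))
  constructor
  · rintro ⟨u, α, hu, hup, hα⟩
    refine ⟨-α, ?_, fun j => ?_⟩
    · have := hα ⟨p - 1, by omega⟩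
      rw [hlast _ rfl] at this
      simp only [eval_add, eval_mul, eval_pow, eval_X, eval_C]
      linear_combination this - α * hup
    · have := hα ⟨j, by omega⟩
      simp only [eval_add, eval_mul, eval_X, eval_C]
      linear_combination this - hu j * α
  · rintro ⟨β, hq, hl⟩
    simp only [eval_add, eval_mul, eval_pow, eval_X, eval_C] at hq hl
    refine ⟨Function.update (fun j : Fin p => e ⟨j, by omega⟩) ⟨p - 1, by omega⟩
      (e ⟨p - 1, by omega⟩ + β), -β, fun j => ?_, ?_, fun j => ?_⟩
    · rw [Function.update_of_ne (Fin.ne_of_val_ne (by simp; omega))]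
    · simp
    · by_cases hj : (j : ℕ) = p - 1
      · rw [Function.update_apply, if_pos (Fin.ext hj), hlast j hj]
        linear_combination hq
      · rw [Function.update_of_ne (Fin.ne_of_val_ne hj)]
        linear_combination hl ⟨j, by omega⟩

end Specialization

/-- a point `(e_1,…,e_{2p}) ∈ k^{2p}` lies in the vanishing locus of the
elimination ideal `⟨f₀,…,f_{p-1}⟩ ∩ k[e_1,…,e_{2p}]` iff there are `u_1,…,u_p, α ∈ k`
with `e_i = u_i` (i ≤ p-1), `e_p = u_p + α`, `e_{p+i} = u_i α`; equivalently, iff the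
specialized polynomials `f₀,…,f_{p-1}` have a common root. -/
theorem stmt6 (k : Type*) [Field k] [IsAlgClosed k] (p : ℕ) (hp : 3 ≤ p)
    (e : Fin (2 * p) → k) :
    ((∀ g ∈ Ideal.comap (Polynomial.C : MvPolynomial (Fin (2 * p)) k →+*
          Polynomial (MvPolynomial (Fin (2 * p)) k)) (Ideal.span (q2Gens k p hp)),
        MvPolynomial.eval e g = 0) ↔
      (∃ u : Fin p → k, ∃ α : k,
        (∀ j : Fin (p - 1), e ⟨(j : ℕ), by have := j.isLt; omega⟩ =
            u ⟨(j : ℕ), by have := j.isLt; omega⟩) ∧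
        e ⟨p - 1, by omega⟩ = u ⟨p - 1, by omega⟩ + α ∧
        (∀ j : Fin p, e ⟨p + (j : ℕ), by have := j.isLt; omega⟩ = u j * α))) ∧
    ((∃ u : Fin p → k, ∃ α : k,
        (∀ j : Fin (p - 1), e ⟨(j : ℕ), by have := j.isLt; omega⟩ =
            u ⟨(j : ℕ), by have := j.isLt; omega⟩) ∧
        e ⟨p - 1, by omega⟩ = u ⟨p - 1, by omega⟩ + α ∧
        (∀ j : Fin p, e ⟨p + (j : ℕ), by have := j.isLt; omega⟩ = u j * α)) ↔
      (∃ β : k,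
        (Polynomial.X ^ 2 + Polynomial.C (e ⟨p - 1, by omega⟩) * Polynomial.X +
            Polynomial.C (e ⟨2 * p - 1, by omega⟩)).eval β = 0 ∧
        ∀ j : Fin (p - 1),
          (Polynomial.C (e ⟨(j : ℕ), by have := j.isLt; omega⟩) * Polynomial.X +
              Polynomial.C (e ⟨p + (j : ℕ), by have := j.isLt; omega⟩)).eval β = 0)) := by
  have hparam := hasParametrization_iff_hasCommonRoot p hp e
  have hvanish : VanishesOnEliminationIdeal p hp e ↔ HasCommonRoot p hp e :=
    ⟨hasCommonRoot_of_vanishesOnEliminationIdeal p hp e,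
      vanishesOnEliminationIdeal_of_hasCommonRoot p hp e⟩
  exact ⟨hvanish.trans hparam.symm, hparam⟩
end

section
/- Let J be the ideal of k[e_1,...,e_{2p}] generated by the 2×2 minors of the 2×(p-1) matrix with rows (e_1,...,e_{p-1}) and (e_{p+1},...,e_{2p-1}), and let n = ⟨e_{p+1},...,e_{2p-1}⟩. Then the natural surjection J/nJ → K is an isomorphism of modules, where K is the kernel of the surjection S/n² → S/I' and I' = J + n². -/
/-- `Ev k p i` is the variable `e_i` of `k[e_1,…,e_{2p}]` for `1 ≤ i ≤ 2p`. -/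
noncomputable def Ev (k : Type*) [Field k] (p : ℕ) :
    ℕ → MvPolynomial (Fin (2 * p)) k := fun i =>
  if h : 1 ≤ i ∧ i ≤ 2 * p then MvPolynomial.X ⟨i - 1, by omega⟩ else 0

/-- `J = I₂(B)`, the ideal of `2×2` minors of the matrix with rows
`(e_1,…,e_{p-1})` and `(e_{p+1},…,e_{2p-1})`. -/
noncomputable def idealJ (k : Type*) [Field k] (p : ℕ) :
    Ideal (MvPolynomial (Fin (2 * p)) k) :=
  Ideal.span {f | ∃ i j : ℕ, 1 ≤ i ∧ i < j ∧ j ≤ p - 1 ∧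
    f = Ev k p i * Ev k p (p + j) - Ev k p j * Ev k p (p + i)}

/-- `n = ⟨e_{p+1},…,e_{2p-1}⟩`. -/
noncomputable def idealN (k : Type*) [Field k] (p : ℕ) :
    Ideal (MvPolynomial (Fin (2 * p)) k) :=
  Ideal.span {f | ∃ i : ℕ, 1 ≤ i ∧ i ≤ p - 1 ∧ f = Ev k p (p + i)}

/-! Grade `S` by the degree in the variables `e_{p+1}, …, e_{2p-1}`. Then `n` is the
irrelevant ideal and the minors generating `J` are homogeneous of degree one. For
`f = Σ cᵢ gᵢ ∈ J`, splitting each `cᵢ` into its degree-zero part and a part in `n` shows that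
`f` minus its degree-one component lies in `n J`, while elements of `n²` have no degree-one
component. Hence `J ∩ n² = n J`, which is the injectivity of `J / n J → S / n²`; that its image
is `K` is formal. -/

open DirectSum HomogeneousIdeal

attribute [local instance] MvPolynomial.weightedGradedAlgebra

section GradedRing

theorem DirectSum.coe_decompose_mul_one {A σ : Type*} [Semiring A] [SetLike σ A]
    [AddSubmonoidClass σ A] (𝒜 : ℕ → σ) [GradedRing 𝒜] (a b : A) :
    (decompose 𝒜 (a * b) 1 : A) =
      decompose 𝒜 a 0 * decompose 𝒜 b 1 + decompose 𝒜 a 1 * decompose 𝒜 b 0 := by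
  rw [decompose_mul, coe_mul_apply_eq_sum_antidiagonal, Finset.Nat.antidiagonal_succ]
  simp

variable {A σ : Type*} [CommRing A] [SetLike σ A] [AddSubgroupClass σ A] (𝒜 : ℕ → σ)
  [GradedRing 𝒜]

namespace HomogeneousIdeal

theorem decompose_zero_eq_zero_of_mem_irrelevant {a : A} (ha : a ∈ 𝒜₊) :
    (decompose 𝒜 a 0 : A) = 0 :=
  ha

theorem sub_decompose_zero_mem_irrelevant (a : A) : a - decompose 𝒜 a 0 ∈ 𝒜₊ := by
  simp [decompose_sub]

theorem decompose_one_eq_zero_of_mem_irrelevant_sq {x : A} (hx : x ∈ 𝒜₊.toIdeal ^ 2) :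
    (decompose 𝒜 x 1 : A) = 0 := by
  rw [pow_two] at hx
  refine Submodule.mul_induction_on hx (fun a ha b hb => ?_) (fun x y hx hy => ?_)
  · rw [coe_decompose_mul_one, decompose_zero_eq_zero_of_mem_irrelevant 𝒜 ha,
      decompose_zero_eq_zero_of_mem_irrelevant 𝒜 hb, zero_mul, mul_zero, add_zero]
  · rw [decompose_add, DirectSum.add_apply, AddMemClass.coe_add, hx, hy, add_zero]

variable {𝒜} {G : Set A}

theorem span_le_irrelevant (hG : ∀ g ∈ G, g ∈ 𝒜 1) : Ideal.span G ≤ 𝒜₊.toIdeal :=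
  Ideal.span_le.mpr fun g hg => mem_irrelevant_of_mem 𝒜 one_pos (hG g hg)

theorem sub_decompose_one_mem_irrelevant_mul_span (hG : ∀ g ∈ G, g ∈ 𝒜 1) {f : A}
    (hf : f ∈ Ideal.span G) : f - decompose 𝒜 f 1 ∈ 𝒜₊.toIdeal * Ideal.span G := by
  induction hf using Submodule.span_induction with
  | mem g hg => simp [decompose_of_mem_same 𝒜 (hG g hg)]
  | zero => simp
  | add x y _ _ hx hy =>
    rw [decompose_add, DirectSum.add_apply, AddMemClass.coe_add, add_sub_add_comm]
    exact add_mem hx hy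
  | smul c x hx ih =>
    have hx0 := decompose_zero_eq_zero_of_mem_irrelevant 𝒜 (span_le_irrelevant hG hx)
    have hsplit : c * x - decompose 𝒜 (c * x) 1 =
        (c - decompose 𝒜 c 0) * x + decompose 𝒜 c 0 * (x - decompose 𝒜 x 1) := by
      rw [coe_decompose_mul_one, hx0]
      ring
    rw [smul_eq_mul, hsplit]
    exact add_mem (Ideal.mul_mem_mul (sub_decompose_zero_mem_irrelevant 𝒜 c) hx)
      (Ideal.mul_mem_left _ _ ih)

theorem span_inf_irrelevant_sq_eq_mul (hG : ∀ g ∈ G, g ∈ 𝒜 1) :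
    Ideal.span G ⊓ 𝒜₊.toIdeal ^ 2 = 𝒜₊.toIdeal * Ideal.span G := by
  refine le_antisymm (fun f hf => ?_) (le_inf Ideal.mul_le_right ?_)
  · simpa [decompose_one_eq_zero_of_mem_irrelevant_sq 𝒜 hf.2] using
      sub_decompose_one_mem_irrelevant_mul_span hG hf.1
  · rw [pow_two]
    exact Ideal.mul_mono_right (span_le_irrelevant hG)

end HomogeneousIdeal

end GradedRing

namespace MvPolynomial

variable {σ R : Type*} [CommSemiring R]

theorem decompose_weightedHomogeneousSubmodule (w : σ → ℕ) (φ : MvPolynomial σ R) (m : ℕ) :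
    (decompose (weightedHomogeneousSubmodule R w) φ m : MvPolynomial σ R) =
      weightedHomogeneousComponent w m φ :=
  weightedDecomposition.decompose'_apply R w φ m

variable (Y : Set σ)

theorem weight_indicator_one_eq_zero_iff {d : σ →₀ ℕ} :
    Finsupp.weight (Y.indicator (1 : σ → ℕ)) d = 0 ↔ ∀ i ∈ Y, d i = 0 := by
  simp only [Finsupp.weight_apply, Finsupp.sum, Finset.sum_eq_zero_iff]
  simp only [smul_eq_mul, mul_eq_zero, Set.indicator_apply_eq_zero, Pi.one_apply, one_ne_zero,
    Finsupp.mem_support_iff]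
  exact forall_congr' fun i => by tauto

theorem span_X_image_eq_irrelevant :
    Ideal.span (X '' Y) =
      (irrelevant (weightedHomogeneousSubmodule R (Y.indicator (1 : σ → ℕ)))).toIdeal := by
  ext f
  rw [mem_ideal_span_X_image, HomogeneousIdeal.mem_iff, mem_irrelevant_iff, GradedRing.proj_apply,
    decompose_weightedHomogeneousSubmodule, MvPolynomial.ext_iff]
  simp only [mem_support_iff, coeff_weightedHomogeneousComponent,
    weight_indicator_one_eq_zero_iff, coeff_zero, ite_eq_right_iff]
  exact forall_congr' fun m => by rw [not_imp_comm]; simp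

variable {Y} in
theorem isWeightedHomogeneous_X_mul_X {u v : σ} (hu : u ∉ Y) (hv : v ∈ Y) :
    IsWeightedHomogeneous (Y.indicator (1 : σ → ℕ)) (X u * X v : MvPolynomial σ R) 1 := by
  simpa [hu, hv] using
    (isWeightedHomogeneous_X R (Y.indicator (1 : σ → ℕ)) u).mul (isWeightedHomogeneous_X R _ v)

end MvPolynomial

theorem Submodule.ker_mkQ_comp_subtype_eq_smul_top {R M : Type*} [Ring R] [AddCommGroup M]
    [Module R M] {I : Ideal R} {J N : Submodule R M} (h : J ⊓ N = I • J) :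
    LinearMap.ker (N.mkQ ∘ₗ J.subtype) = I • ⊤ := by
  ext x
  rw [Submodule.mem_smul_top_iff, ← h]
  simp [x.2]

theorem Submodule.range_mkQ_comp_subtype {R M : Type*} [Ring R] [AddCommGroup M] [Module R M]
    (J N : Submodule R M) : LinearMap.range (N.mkQ ∘ₗ J.subtype) = (J ⊔ N).map N.mkQ := by
  rw [LinearMap.range_comp, range_subtype, map_sup, mkQ_map_self, sup_bot_eq]

open MvPolynomial

/-- The 0-based indices of `e_{p+1}, …, e_{2p-1}` in `Fin (2 * p)`. -/
def yIndices (p : ℕ) : Set (Fin (2 * p)) := {v | p ≤ v.val ∧ v.val < 2 * p - 1}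

section

variable (k : Type*) [Field k] {p : ℕ}

theorem Ev_eq_X {i : ℕ} (h₁ : 1 ≤ i) (h₂ : i ≤ 2 * p) : Ev k p i = X ⟨i - 1, by omega⟩ :=
  dif_pos ⟨h₁, h₂⟩

theorem idealN_eq_span_X_image : idealN k p = Ideal.span (X '' yIndices p) := by
  rw [idealN]
  congr 1
  ext f
  constructor
  · rintro ⟨i, hi₁, hi₂, rfl⟩
    exact ⟨⟨p + i - 1, by omega⟩, show p ≤ p + i - 1 ∧ p + i - 1 < 2 * p - 1 by omega,
      (Ev_eq_X k (by omega) (by omega)).symm⟩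
  · rintro ⟨v, ⟨hv₁, hv₂⟩, rfl⟩
    refine ⟨v - p + 1, by omega, by omega, ?_⟩
    rw [Ev_eq_X k (by omega) (by omega)]
    exact congrArg X (Fin.ext (by dsimp only; omega))

theorem minor_isWeightedHomogeneous {i j : ℕ} (hi : 1 ≤ i) (hij : i < j) (hj : j ≤ p - 1) :
    IsWeightedHomogeneous ((yIndices p).indicator (1 : Fin (2 * p) → ℕ))
      (Ev k p i * Ev k p (p + j) - Ev k p j * Ev k p (p + i)) 1 := by
  rw [Ev_eq_X k hi (by omega), Ev_eq_X k (by omega : 1 ≤ j) (by omega),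
    Ev_eq_X k (by omega : 1 ≤ p + j) (by omega), Ev_eq_X k (by omega : 1 ≤ p + i) (by omega)]
  exact (isWeightedHomogeneous_X_mul_X (Y := yIndices p)
      (show ¬(p ≤ i - 1 ∧ i - 1 < 2 * p - 1) by omega)
      (show p ≤ p + j - 1 ∧ p + j - 1 < 2 * p - 1 by omega)).sub
    (isWeightedHomogeneous_X_mul_X (Y := yIndices p)
      (show ¬(p ≤ j - 1 ∧ j - 1 < 2 * p - 1) by omega)
      (show p ≤ p + i - 1 ∧ p + i - 1 < 2 * p - 1 by omega))

theorem idealJ_inf_idealN_sq : idealJ k p ⊓ idealN k p ^ 2 = idealN k p * idealJ k p := by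
  rw [idealN_eq_span_X_image, span_X_image_eq_irrelevant]
  exact span_inf_irrelevant_sq_eq_mul fun g ⟨i, j, hi, hij, hj, hg⟩ =>
    hg ▸ minor_isWeightedHomogeneous k hi hij hj

end

theorem stmt13_general (k : Type*) [Field k] (p : ℕ) :
    LinearMap.range ((Submodule.mkQ ((idealN k p ^ 2 : Ideal (MvPolynomial (Fin (2 * p)) k)) :
          Submodule (MvPolynomial (Fin (2 * p)) k) (MvPolynomial (Fin (2 * p)) k))).comp
        (Submodule.subtype (idealJ k p :
          Submodule (MvPolynomial (Fin (2 * p)) k) (MvPolynomial (Fin (2 * p)) k)))) =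
      Submodule.map
        (Submodule.mkQ ((idealN k p ^ 2 : Ideal (MvPolynomial (Fin (2 * p)) k)) :
          Submodule (MvPolynomial (Fin (2 * p)) k) (MvPolynomial (Fin (2 * p)) k)))
        ((idealJ k p + idealN k p ^ 2 : Ideal (MvPolynomial (Fin (2 * p)) k)) :
          Submodule (MvPolynomial (Fin (2 * p)) k) (MvPolynomial (Fin (2 * p)) k)) ∧
    LinearMap.ker ((Submodule.mkQ ((idealN k p ^ 2 : Ideal (MvPolynomial (Fin (2 * p)) k)) :
          Submodule (MvPolynomial (Fin (2 * p)) k) (MvPolynomial (Fin (2 * p)) k))).comp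
        (Submodule.subtype (idealJ k p :
          Submodule (MvPolynomial (Fin (2 * p)) k) (MvPolynomial (Fin (2 * p)) k)))) =
      idealN k p • (⊤ : Submodule (MvPolynomial (Fin (2 * p)) k) (idealJ k p)) := by
  exact ⟨Submodule.range_mkQ_comp_subtype _ _,
    Submodule.ker_mkQ_comp_subtype_eq_smul_top (idealJ_inf_idealN_sq k)⟩

/-- the natural surjection `J/nJ → K` is an isomorphism, where
`K = ker(S/n² → S/I')` with `I' = J + n²`.  Formally, the composite
`J → S → S/n²` has image exactly `K` (the image of `I'` in `S/n²`) and kernel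
exactly `nJ`, which together say precisely that the induced map
`J/nJ → K` is an isomorphism. -/
theorem stmt13 (k : Type*) [Field k] (p : ℕ) (hp : 3 ≤ p) :
    LinearMap.range ((Submodule.mkQ ((idealN k p ^ 2 : Ideal (MvPolynomial (Fin (2 * p)) k)) :
          Submodule (MvPolynomial (Fin (2 * p)) k) (MvPolynomial (Fin (2 * p)) k))).comp
        (Submodule.subtype (idealJ k p :
          Submodule (MvPolynomial (Fin (2 * p)) k) (MvPolynomial (Fin (2 * p)) k)))) =
      Submodule.map
        (Submodule.mkQ ((idealN k p ^ 2 : Ideal (MvPolynomial (Fin (2 * p)) k)) :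
          Submodule (MvPolynomial (Fin (2 * p)) k) (MvPolynomial (Fin (2 * p)) k)))
        ((idealJ k p + idealN k p ^ 2 : Ideal (MvPolynomial (Fin (2 * p)) k)) :
          Submodule (MvPolynomial (Fin (2 * p)) k) (MvPolynomial (Fin (2 * p)) k)) ∧
    LinearMap.ker ((Submodule.mkQ ((idealN k p ^ 2 : Ideal (MvPolynomial (Fin (2 * p)) k)) :
          Submodule (MvPolynomial (Fin (2 * p)) k) (MvPolynomial (Fin (2 * p)) k))).comp
        (Submodule.subtype (idealJ k p :
          Submodule (MvPolynomial (Fin (2 * p)) k) (MvPolynomial (Fin (2 * p)) k)))) =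
      idealN k p • (⊤ : Submodule (MvPolynomial (Fin (2 * p)) k) (idealJ k p)) :=
  stmt13_general k p
end
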